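/- Positive (semi)definiteness of the transition matrix: for every x ∈ ℝ³ with ‖x‖₂ ≤ π and every z ∈ ℝ³, zᵀ L_x z ≥ 0; moreover, if ‖x‖₂ < π and z ≠ 0, then zᵀ L_x z > 0. -/

import Mathlib

open Matrix Real

noncomputable section

/-- The skew-symmetric "hat" matrix of a vector in ℝ³. -/
def hatm (p : Fin 3 → ℝ) : Matrix (Fin 3) (Fin 3) ℝ :=
  !![0, -p 2, p 1; p 2, 0, -p 0; -p 1, p 0, 0]

/-- The Euclidean (ℓ²) norm on ℝ³. -/
def norm2 (p : Fin 3 → ℝ) : ℝ := Real.sqrt (∑ i, p i ^ 2)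

/-- The unnormalized sinc function: α · sinc α = sin α, sinc 0 = 1. -/
def sinc (α : ℝ) : ℝ := if α = 0 then 1 else Real.sin α / α

/-- c(θ) = sinc(θ)/sinc²(θ/2). -/
def cfun (θ : ℝ) : ℝ := _root_.sinc θ / _root_.sinc (θ / 2) ^ 2

/-- The symmetric part L¹ₓ of the transition matrix (L¹₀ := I₃). -/
def L1mat (x : Fin 3 → ℝ) : Matrix (Fin 3) (Fin 3) ℝ :=
  if x = 0 then 1 else
    cfun (norm2 x) • (1 : Matrix (Fin 3) (Fin 3) ℝ)
      + ((1 - cfun (norm2 x)) / norm2 x ^ 2) • vecMulVec x x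

/-- The transition matrix Lₓ of the axis-angle kinematics (L₀ := I₃). -/
def Lmat (x : Fin 3 → ℝ) : Matrix (Fin 3) (Fin 3) ℝ :=
  if x = 0 then 1 else
    cfun (norm2 x) • (1 : Matrix (Fin 3) (Fin 3) ℝ)
      + ((1 - cfun (norm2 x)) / norm2 x ^ 2) • vecMulVec x x
      + (1 / 2 : ℝ) • hatm x

/-!
The skew part `½ x̂` of `Lₓ` contributes nothing to the quadratic form, and with
`p = (x ⬝ z)² / ‖x‖²` the symmetric part gives `zᵀ Lₓ z = c(‖x‖) ‖z‖² + (1 - c(‖x‖)) p`.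
By Cauchy–Schwarz `0 ≤ p ≤ ‖z‖²`, so this is nonnegative as soon as `c(‖x‖) ≥ 0`, i.e. for
`‖x‖ ≤ π`, and positive for `z ≠ 0` as soon as `c(‖x‖) > 0`, i.e. for `‖x‖ < π`.
-/

namespace Matrix

variable {n R : Type*} [Fintype n]

theorem dotProduct_mulVec_self_eq_zero_of_transpose_eq_neg [CommRing R] [NoZeroDivisors R]
    [CharZero R] {A : Matrix n n R} (hA : Aᵀ = -A) (z : n → R) : z ⬝ᵥ A *ᵥ z = 0 := by
  rw [← CharZero.eq_neg_self_iff]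
  calc z ⬝ᵥ A *ᵥ z = z ⬝ᵥ Aᵀ *ᵥ z := by rw [dotProduct_mulVec, ← mulVec_transpose, dotProduct_comm]
    _ = -(z ⬝ᵥ A *ᵥ z) := by rw [hA, neg_mulVec, dotProduct_neg]

theorem dotProduct_vecMulVec_self_mulVec [CommRing R] (x z : n → R) :
    z ⬝ᵥ vecMulVec x x *ᵥ z = (x ⬝ᵥ z) ^ 2 := by
  rw [vecMulVec_mulVec, op_smul_eq_smul, dotProduct_smul, smul_eq_mul, dotProduct_comm, sq]

section LinearOrder

variable [CommRing R] [LinearOrder R] [IsStrictOrderedRing R]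

theorem dotProduct_self_nonneg (v : n → R) : 0 ≤ v ⬝ᵥ v :=
  Finset.sum_nonneg fun i _ => mul_self_nonneg (v i)

theorem dotProduct_self_pos {v : n → R} (hv : v ≠ 0) : 0 < v ⬝ᵥ v :=
  (dotProduct_self_nonneg v).lt_of_ne' (mt dotProduct_self_eq_zero.mp hv)

theorem sq_dotProduct_le (x z : n → R) : (x ⬝ᵥ z) ^ 2 ≤ (x ⬝ᵥ x) * (z ⬝ᵥ z) := by
  simpa only [dotProduct, sq] using Finset.sum_mul_sq_le_sq_mul_sq Finset.univ x z

end LinearOrder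

theorem sq_dotProduct_div_self_le {K : Type*} [Field K] [LinearOrder K] [IsStrictOrderedRing K]
    (x z : n → K) : (x ⬝ᵥ z) ^ 2 / (x ⬝ᵥ x) ≤ z ⬝ᵥ z :=
  div_le_of_le_mul₀ (dotProduct_self_nonneg x) (dotProduct_self_nonneg z)
    ((sq_dotProduct_le x z).trans_eq (mul_comm _ _))

end Matrix

section Interpolation

variable {K : Type*} [CommRing K] [LinearOrder K] [IsStrictOrderedRing K]

theorem mul_add_one_sub_mul_nonneg {c p q : K} (hc : 0 ≤ c) (hp : 0 ≤ p) (hpq : p ≤ q) :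
    0 ≤ c * q + (1 - c) * p := by
  nlinarith

theorem mul_add_one_sub_mul_pos {c p q : K} (hc : 0 < c) (hp : 0 ≤ p) (hpq : p ≤ q)
    (hq : 0 < q) : 0 < c * q + (1 - c) * p := by
  rcases le_total c 1 with hc1 | hc1
  · nlinarith
  · nlinarith

end Interpolation

theorem sinc_nonneg_of_nonneg_of_le_pi {θ : ℝ} (h0 : 0 ≤ θ) (hπ : θ ≤ π) : 0 ≤ _root_.sinc θ := by
  unfold _root_.sinc
  split_ifs
  · exact zero_le_one
  · exact div_nonneg (sin_nonneg_of_nonneg_of_le_pi h0 hπ) h0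

theorem sinc_pos_of_nonneg_of_lt_pi {θ : ℝ} (h0 : 0 ≤ θ) (hπ : θ < π) : 0 < _root_.sinc θ := by
  unfold _root_.sinc
  split_ifs with hθ
  · exact zero_lt_one
  · have hθ : 0 < θ := h0.lt_of_ne' hθ
    exact div_pos (sin_pos_of_pos_of_lt_pi hθ hπ) hθ

theorem cfun_nonneg_of_nonneg_of_le_pi {θ : ℝ} (h0 : 0 ≤ θ) (hπ : θ ≤ π) : 0 ≤ cfun θ :=
  div_nonneg (sinc_nonneg_of_nonneg_of_le_pi h0 hπ) (sq_nonneg _)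

theorem cfun_pos_of_nonneg_of_lt_pi {θ : ℝ} (h0 : 0 ≤ θ) (hπ : θ < π) : 0 < cfun θ :=
  div_pos (sinc_pos_of_nonneg_of_lt_pi h0 hπ)
    (pow_pos (sinc_pos_of_nonneg_of_lt_pi (by linarith) (by linarith [pi_pos])) 2)

theorem cfun_zero : cfun 0 = 1 := by
  simp [cfun, _root_.sinc]

theorem norm2_nonneg (x : Fin 3 → ℝ) : 0 ≤ norm2 x :=
  sqrt_nonneg _

theorem norm2_sq (x : Fin 3 → ℝ) : norm2 x ^ 2 = x ⬝ᵥ x := by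
  rw [norm2, sq_sqrt (Finset.sum_nonneg fun i _ => sq_nonneg (x i))]
  simp only [dotProduct, sq]

theorem hatm_zero : hatm 0 = 0 := by
  ext i j
  fin_cases i <;> fin_cases j <;> simp [hatm]

theorem hatm_transpose (x : Fin 3 → ℝ) : (hatm x)ᵀ = -hatm x := by
  ext i j
  fin_cases i <;> fin_cases j <;> simp [hatm]

theorem Lmat_eq_L1mat_add_hatm (x : Fin 3 → ℝ) : Lmat x = L1mat x + (1 / 2 : ℝ) • hatm x := by
  by_cases hx : x = 0
  · simp [Lmat, L1mat, hx, hatm_zero]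
  · simp only [Lmat, L1mat, hx, if_false]

theorem dotProduct_L1mat_mulVec (x z : Fin 3 → ℝ) :
    z ⬝ᵥ L1mat x *ᵥ z
      = cfun (norm2 x) * (z ⬝ᵥ z) + (1 - cfun (norm2 x)) * ((x ⬝ᵥ z) ^ 2 / (x ⬝ᵥ x)) := by
  by_cases hx : x = 0
  -- both sides are `z ⬝ᵥ z`, since `L¹₀ = 1` and `c(0) = 1`
  · simp [L1mat, hx, norm2, cfun_zero]
  · rw [L1mat, if_neg hx, add_mulVec, smul_mulVec, smul_mulVec, one_mulVec, dotProduct_add,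
      dotProduct_smul, dotProduct_smul, dotProduct_vecMulVec_self_mulVec, norm2_sq]
    simp only [smul_eq_mul]
    ring

theorem dotProduct_Lmat_mulVec (x z : Fin 3 → ℝ) :
    z ⬝ᵥ Lmat x *ᵥ z
      = cfun (norm2 x) * (z ⬝ᵥ z) + (1 - cfun (norm2 x)) * ((x ⬝ᵥ z) ^ 2 / (x ⬝ᵥ x)) := by
  rw [Lmat_eq_L1mat_add_hatm, add_mulVec, dotProduct_add, smul_mulVec, dotProduct_smul,
    dotProduct_mulVec_self_eq_zero_of_transpose_eq_neg (hatm_transpose x), smul_zero, add_zero,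
    dotProduct_L1mat_mulVec]

/-- positive (semi)definiteness of the transition matrix. -/
theorem transition_matrix_posdef (x z : Fin 3 → ℝ) :
    (norm2 x ≤ Real.pi → 0 ≤ z ⬝ᵥ (Lmat x).mulVec z) ∧
    (norm2 x < Real.pi → z ≠ 0 → 0 < z ⬝ᵥ (Lmat x).mulVec z) := by
  have hproj_nonneg : 0 ≤ (x ⬝ᵥ z) ^ 2 / (x ⬝ᵥ x) :=
    div_nonneg (sq_nonneg _) (dotProduct_self_nonneg x)
  have hproj_le := sq_dotProduct_div_self_le x z
  rw [dotProduct_Lmat_mulVec]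
  refine ⟨fun hπ => ?_, fun hπ hz => ?_⟩
  · exact mul_add_one_sub_mul_nonneg (cfun_nonneg_of_nonneg_of_le_pi (norm2_nonneg x) hπ)
      hproj_nonneg hproj_le
  · exact mul_add_one_sub_mul_pos (cfun_pos_of_nonneg_of_lt_pi (norm2_nonneg x) hπ)
      hproj_nonneg hproj_le (dotProduct_self_pos hz)
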